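/- Fix a graded system of Hilbert spaces with product ∘. Let σ < −1 and ρ, s ∈ ℝ, and take the weights w₀ = 1 and w_n = (n!)^σ·2^{ρn}·(1 + n)^s for n ≥ 1. Then there exists a constant γ > 0 such that for all elements a, b of the algebra, ‖a ∘ b‖_w ≤ γ·‖a‖_w·‖b‖_w. -/

import Mathlib

/-! A graded system of Hilbert spaces: a family `(E n)_{n ≥ 1}` of real inner product spaces
together with bilinear maps `mul p q : E p →ₗ E q →ₗ E (p+q)`.  An element of the associated
algebra is a pair `(a₀, (a n)_{n ≥ 1})` with `a₀ : ℝ`, `a n : E n`, all but finitely many `a n`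
zero (the component `a 0` is unused dead data).  -/

/-- The degree-`n` component (`n ≥ 1`) of the product of the elements `(a₀, a)` and `(b₀, b)`:
`c n = a₀ • b n + b₀ • a n + ∑_{p+q=n, p,q ≥ 1} a p ∘ b q`. -/
noncomputable def gradedMul {E : ℕ → Type*} [∀ n, NormedAddCommGroup (E n)]
    [∀ n, InnerProductSpace ℝ (E n)]
    (mul : ∀ p q : ℕ, E p →ₗ[ℝ] E q →ₗ[ℝ] E (p + q))
    (a₀ : ℝ) (a : ∀ n, E n) (b₀ : ℝ) (b : ∀ n, E n) (n : ℕ) : E n :=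
  a₀ • b n + b₀ • a n +
    ∑ p ∈ Finset.Ioo 0 n,
      if h : p + (n - p) = n then cast (congrArg E h) (mul p (n - p) (a p) (b (n - p))) else 0

/-- The weighted Hilbert norm `‖a‖_w = √(a₀² + ∑_{n ≥ 1} w n · ‖a n‖²)` (the weight `w 0 = 1`
of the scalar component is built in). -/
noncomputable def wnorm {E : ℕ → Type*} [∀ n, NormedAddCommGroup (E n)]
    (w : ℕ → ℝ) (a₀ : ℝ) (a : ∀ n, E n) : ℝ :=
  Real.sqrt (a₀ ^ 2 + ∑' n : ℕ, w (n + 1) * ‖a (n + 1)‖ ^ 2)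

/-- The weight family `w n (σ, ρ, s) = (n!)^σ · 2^(ρn) · (1+n)^s` on positive integers,
with real exponents (real powers). -/
noncomputable def wgt (σ ρ s : ℝ) (n : ℕ) : ℝ :=
  ((n.factorial : ℝ)) ^ σ * (2 : ℝ) ^ (ρ * n) * (1 + (n : ℝ)) ^ s

/-! Since `(p+q)! = C(p+q, p) · p! · q!` and `C(p+q, p) ≥ 2^min(p,q)`, for `σ ≤ 0` the weights
satisfy `w (p+q) ≤ g (min p q) · w p · w q` with `g m = 2^(σm) (1+m)^|s|`, and `g` is summable as
soon as `σ < 0`. Taking square roots, `√w (p+q) ≤ (√g p + √g q) √w p √w q`, so the weighted norms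
of the components of `a ∘ b` are dominated, apart from the scalar terms, by the two convolutions
`(√g α) * β` and `(√g β) * α` of the weighted component norms `α`, `β` of `a` and `b`. Young's
inequality `‖u * v‖₂ ≤ ‖u‖₁ ‖v‖₂` and Cauchy–Schwarz `‖√g α‖₁ ≤ ‖√g‖₂ ‖α‖₂` bound these by
`(∑ g)^(1/2) ‖a‖_w ‖b‖_w`. -/

open Finset

theorem Nat.two_pow_le_centralBinom (n : ℕ) : 2 ^ n ≤ n.centralBinom := by
  induction n with
  | zero => simp
  | succ n ih =>
    refine Nat.le_of_mul_le_mul_left ?_ n.succ_pos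
    rw [Nat.succ_mul_centralBinom_succ, pow_succ]
    nlinarith

theorem Nat.two_pow_min_le_choose (p q : ℕ) : 2 ^ min p q ≤ (p + q).choose p := by
  wlog hpq : p ≤ q generalizing p q
  · rw [min_comm, Nat.choose_symm_add, add_comm]
    exact this q p (by omega)
  rw [min_eq_left hpq]
  calc 2 ^ p ≤ p.centralBinom := Nat.two_pow_le_centralBinom p
    _ = (2 * p).choose p := Nat.centralBinom_eq_two_mul_choose p
    _ ≤ (p + q).choose p := Nat.choose_le_choose p (by omega)

theorem factorial_add_rpow_le {σ : ℝ} (hσ : σ ≤ 0) (p q : ℕ) :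
    ((p + q).factorial : ℝ) ^ σ ≤
      ((2 : ℝ) ^ σ) ^ min p q * ((p.factorial : ℝ) ^ σ * (q.factorial : ℝ) ^ σ) := by
  have hchoose : ((2 : ℝ) ^ min p q) ≤ (p + q).choose q := by
    rw [← Nat.choose_symm_add]
    exact_mod_cast Nat.two_pow_min_le_choose p q
  rw [← Nat.add_choose_mul_factorial_mul_factorial, Nat.cast_mul, Nat.cast_mul,
    Real.mul_rpow (by positivity) (by positivity), Real.mul_rpow (by positivity) (by positivity),
    Real.rpow_pow_comm (by norm_num), mul_assoc]
  exact mul_le_mul_of_nonneg_right (Real.rpow_le_rpow_of_nonpos (by positivity) hchoose hσ)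
    (by positivity)

theorem one_add_add_rpow_le {x y : ℝ} (hx : 0 ≤ x) (hy : 0 ≤ y) (s : ℝ) :
    (1 + (x + y)) ^ s ≤ (1 + min x y) ^ |s| * ((1 + x) ^ s * (1 + y) ^ s) := by
  have hm : 0 ≤ min x y := le_min hx hy
  rcases le_total 0 s with hs | hs
  · rw [abs_of_nonneg hs, ← Real.mul_rpow (by positivity) (by positivity),
      ← Real.mul_rpow (by positivity) (by positivity)]
    refine Real.rpow_le_rpow (by positivity) ?_ hs
    nlinarith [mul_nonneg hx hy, mul_nonneg hm (add_nonneg (add_nonneg hx hy) (mul_nonneg hx hy))]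
  · rw [abs_of_nonpos hs, Real.rpow_neg (by positivity), ← div_eq_inv_mul,
      le_div_iff₀' (by positivity), ← Real.mul_rpow (by positivity) (by positivity),
      ← Real.mul_rpow (by positivity) (by positivity)]
    refine Real.rpow_le_rpow_of_nonpos (by positivity) ?_ hs
    rcases min_cases x y with ⟨h, _⟩ | ⟨h, _⟩ <;> rw [h] <;> nlinarith

theorem wgt_pos (σ ρ s : ℝ) (n : ℕ) : 0 < wgt σ ρ s n := by
  unfold wgt
  positivity

theorem wgt_add_le {σ : ℝ} (hσ : σ ≤ 0) (ρ s : ℝ) (p q : ℕ) :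
    wgt σ ρ s (p + q) ≤
      ((2 : ℝ) ^ σ) ^ min p q * (1 + (min p q : ℕ) : ℝ) ^ |s| * (wgt σ ρ s p * wgt σ ρ s q) := by
  have hexp : (2 : ℝ) ^ (ρ * (p + q : ℕ)) = 2 ^ (ρ * p) * 2 ^ (ρ * q) := by
    rw [← Real.rpow_add two_pos]
    push_cast
    ring_nf
  have hpoly := one_add_add_rpow_le p.cast_nonneg q.cast_nonneg s
  rw [← Nat.cast_min, ← Nat.cast_add] at hpoly
  unfold wgt
  calc ((p + q).factorial : ℝ) ^ σ * 2 ^ (ρ * (p + q : ℕ)) * (1 + ((p + q : ℕ) : ℝ)) ^ s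
      ≤ (((2 : ℝ) ^ σ) ^ min p q * ((p.factorial : ℝ) ^ σ * (q.factorial : ℝ) ^ σ)) *
          (2 ^ (ρ * p) * 2 ^ (ρ * q)) *
          ((1 + (min p q : ℕ) : ℝ) ^ |s| * ((1 + (p : ℝ)) ^ s * (1 + (q : ℝ)) ^ s)) := by
        rw [hexp]
        gcongr
        exact factorial_add_rpow_le hσ p q
    _ = _ := by ring

theorem summable_geometric_mul_one_add_rpow {r : ℝ} (hr₀ : 0 < r) (hr₁ : r < 1) (t : ℝ) :
    Summable fun m : ℕ => r ^ m * (1 + m : ℝ) ^ t := by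
  have hnat : Summable fun m : ℕ => r ^ m * (1 + m : ℝ) ^ ⌈t⌉₊ := by
    have h : Summable fun m : ℕ => ((m + 1 : ℕ) : ℝ) ^ ⌈t⌉₊ * r ^ (m + 1) :=
      (summable_nat_add_iff (f := fun m : ℕ => (m : ℝ) ^ ⌈t⌉₊ * r ^ m) 1).mpr <|
        summable_pow_mul_geometric_of_norm_lt_one ⌈t⌉₊ (by rwa [Real.norm_eq_abs, abs_of_pos hr₀])
    refine (summable_mul_left_iff hr₀.ne').mp (h.congr fun m => ?_)
    push_cast
    ring
  refine hnat.of_nonneg_of_le (fun m => by positivity) fun m => ?_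
  gcongr
  rw [← Real.rpow_natCast]
  exact Real.rpow_le_rpow_of_exponent_le (by linarith [m.cast_nonneg (α := ℝ)]) (Nat.le_ceil t)

theorem Finset.sum_Ioo_zero_reflect {M : Type*} [AddCommMonoid M] (F : ℕ → M) (n : ℕ) :
    ∑ p ∈ Ioo 0 n, F (n - p) = ∑ p ∈ Ioo 0 n, F p :=
  sum_nbij' (n - ·) (n - ·) (by simp; omega) (by simp; omega) (by simp; omega) (by simp; omega)
    fun _ _ => rfl

theorem Finset.sum_Ioo_conv_le_sum_Ioo_sum_Ioo (M : ℕ) {F : ℕ → ℕ → ℝ} (hF : ∀ p q, 0 ≤ F p q) :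
    ∑ n ∈ Ioo 0 M, ∑ p ∈ Ioo 0 n, F p (n - p) ≤ ∑ p ∈ Ioo 0 M, ∑ q ∈ Ioo 0 M, F p q := by
  rw [sum_comm' (t' := Ioo 0 M) (s' := fun p => Ioo p M) (by simp; omega)]
  refine sum_le_sum fun p hp => ?_
  calc ∑ n ∈ Ioo p M, F p (n - p) = ∑ q ∈ (Ioo p M).image (· - p), F p q := by
        rw [sum_image (by simp only [coe_Ioo, Set.InjOn, Set.mem_Ioo]; omega)]
    _ ≤ ∑ q ∈ Ioo 0 M, F p q :=
        sum_le_sum_of_subset_of_nonneg (by intro q; simp; omega) fun q _ _ => hF p q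

theorem Finset.sum_Ioo_sq_conv_le (M : ℕ) {u : ℕ → ℝ} (hu : ∀ p, 0 ≤ u p) (v : ℕ → ℝ) :
    ∑ n ∈ Ioo 0 M, (∑ p ∈ Ioo 0 n, u p * v (n - p)) ^ 2 ≤
      (∑ p ∈ Ioo 0 M, u p) ^ 2 * ∑ q ∈ Ioo 0 M, v q ^ 2 := by
  set U := ∑ p ∈ Ioo 0 M, u p
  have hU : 0 ≤ U := sum_nonneg fun p _ => hu p
  have hCS : ∀ n ∈ Ioo 0 M, (∑ p ∈ Ioo 0 n, u p * v (n - p)) ^ 2 ≤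
      U * ∑ p ∈ Ioo 0 n, u p * v (n - p) ^ 2 := fun n hn => by
    refine (sum_sq_le_sum_mul_sum_of_sq_le_mul _ (f := u) (g := fun p => u p * v (n - p) ^ 2)
      (fun p _ => hu p) (fun p _ => mul_nonneg (hu p) (sq_nonneg _))
      fun p _ => le_of_eq (by ring)).trans ?_
    exact mul_le_mul_of_nonneg_right
      (sum_le_sum_of_subset_of_nonneg (by intro p; simp at hn ⊢; omega) fun p _ _ => hu p)
      (sum_nonneg fun p _ => mul_nonneg (hu p) (sq_nonneg _))
  calc _ ≤ ∑ n ∈ Ioo 0 M, U * ∑ p ∈ Ioo 0 n, u p * v (n - p) ^ 2 := sum_le_sum hCS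
    _ ≤ U * ∑ p ∈ Ioo 0 M, ∑ q ∈ Ioo 0 M, u p * v q ^ 2 := by
        rw [← mul_sum]
        exact mul_le_mul_of_nonneg_left
          (sum_Ioo_conv_le_sum_Ioo_sum_Ioo M fun p q => mul_nonneg (hu p) (sq_nonneg _)) hU
    _ = U ^ 2 * ∑ q ∈ Ioo 0 M, v q ^ 2 := by simp_rw [← mul_sum, ← sum_mul]; ring

theorem Finset.sum_Ioo_sq_weighted_conv_le (M : ℕ) {f α β : ℕ → ℝ} (hf : ∀ n, 0 ≤ f n)
    (hα : ∀ n, 0 ≤ α n) :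
    ∑ n ∈ Ioo 0 M, (∑ p ∈ Ioo 0 n, f p * α p * β (n - p)) ^ 2 ≤
      (∑ p ∈ Ioo 0 M, f p ^ 2) * (∑ p ∈ Ioo 0 M, α p ^ 2) * ∑ q ∈ Ioo 0 M, β q ^ 2 :=
  (sum_Ioo_sq_conv_le M (fun p => mul_nonneg (hf p) (hα p)) β).trans <|
    mul_le_mul_of_nonneg_right (sum_mul_sq_le_sq_mul_sq _ f α) (sum_nonneg fun _ _ => sq_nonneg _)

theorem add_add_add_sq_le (a b c d : ℝ) :
    (a + b + c + d) ^ 2 ≤ 4 * (a ^ 2 + b ^ 2 + c ^ 2 + d ^ 2) := by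
  nlinarith [sq_nonneg (a - b), sq_nonneg (a - c), sq_nonneg (a - d), sq_nonneg (b - c),
    sq_nonneg (b - d), sq_nonneg (c - d)]

theorem Finset.sum_Ioo_sq_le_of_le_conv (M : ℕ) {f α β γ : ℕ → ℝ} (hf : ∀ n, 0 ≤ f n)
    (hα : ∀ n, 0 ≤ α n) (hβ : ∀ n, 0 ≤ β n) (hγ : ∀ n, 0 ≤ γ n) {x y : ℝ}
    (h : ∀ n, γ n ≤ |x| * β n + |y| * α n + ∑ p ∈ Ioo 0 n, f p * α p * β (n - p) +
      ∑ p ∈ Ioo 0 n, f p * β p * α (n - p)) :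
    ∑ n ∈ Ioo 0 M, γ n ^ 2 ≤
      4 * (x ^ 2 * ∑ n ∈ Ioo 0 M, β n ^ 2 + y ^ 2 * ∑ n ∈ Ioo 0 M, α n ^ 2 +
        2 * (∑ n ∈ Ioo 0 M, f n ^ 2) * (∑ n ∈ Ioo 0 M, α n ^ 2) * ∑ n ∈ Ioo 0 M, β n ^ 2) := by
  calc ∑ n ∈ Ioo 0 M, γ n ^ 2
      ≤ ∑ n ∈ Ioo 0 M, 4 * ((|x| * β n) ^ 2 + (|y| * α n) ^ 2 +
          (∑ p ∈ Ioo 0 n, f p * α p * β (n - p)) ^ 2 +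
          (∑ p ∈ Ioo 0 n, f p * β p * α (n - p)) ^ 2) :=
        sum_le_sum fun n _ => (pow_le_pow_left₀ (hγ n) (h n) 2).trans (add_add_add_sq_le ..)
    _ = 4 * (x ^ 2 * ∑ n ∈ Ioo 0 M, β n ^ 2 + y ^ 2 * ∑ n ∈ Ioo 0 M, α n ^ 2 +
          ∑ n ∈ Ioo 0 M, (∑ p ∈ Ioo 0 n, f p * α p * β (n - p)) ^ 2 +
          ∑ n ∈ Ioo 0 M, (∑ p ∈ Ioo 0 n, f p * β p * α (n - p)) ^ 2) := by
        simp only [mul_pow, sq_abs, ← mul_sum, sum_add_distrib]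
    _ ≤ _ := by
        have := sum_Ioo_sq_weighted_conv_le M hf hα (β := β)
        have := sum_Ioo_sq_weighted_conv_le M hf hβ (β := α)
        nlinarith

theorem mul_le_weighted_conv_of_le_conv {v f A B : ℕ → ℝ} (hv : ∀ n, 0 ≤ v n)
    (hvf : ∀ p q, 1 ≤ p → 1 ≤ q → v (p + q) ≤ (f p + f q) * (v p * v q))
    (hA : ∀ n, 0 ≤ A n) (hB : ∀ n, 0 ≤ B n) {x y c : ℝ} {n : ℕ}
    (hc : c ≤ |x| * B n + |y| * A n + ∑ p ∈ Ioo 0 n, A p * B (n - p)) :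
    v n * c ≤ |x| * (v n * B n) + |y| * (v n * A n) +
      ∑ p ∈ Ioo 0 n, f p * (v p * A p) * (v (n - p) * B (n - p)) +
      ∑ p ∈ Ioo 0 n, f p * (v p * B p) * (v (n - p) * A (n - p)) := by
  have hflip : ∑ p ∈ Ioo 0 n, f p * (v p * B p) * (v (n - p) * A (n - p)) =
      ∑ p ∈ Ioo 0 n, f (n - p) * (v (n - p) * B (n - p)) * (v p * A p) := by
    rw [← sum_Ioo_zero_reflect]
    exact sum_congr rfl fun p hp => by rw [Nat.sub_sub_self (mem_Ioo.mp hp).2.le]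
  calc v n * c ≤ v n * (|x| * B n + |y| * A n + ∑ p ∈ Ioo 0 n, A p * B (n - p)) :=
        mul_le_mul_of_nonneg_left hc (hv n)
    _ = |x| * (v n * B n) + |y| * (v n * A n) + ∑ p ∈ Ioo 0 n, v n * (A p * B (n - p)) := by
        rw [← mul_sum]; ring
    _ ≤ |x| * (v n * B n) + |y| * (v n * A n) + ∑ p ∈ Ioo 0 n,
          (f p * (v p * A p) * (v (n - p) * B (n - p)) +
            f (n - p) * (v (n - p) * B (n - p)) * (v p * A p)) := by
        gcongr with p hp
        obtain ⟨hp₀, hpn⟩ := mem_Ioo.mp hp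
        have hv' := hvf p (n - p) hp₀ (by omega)
        rw [Nat.add_sub_cancel' hpn.le] at hv'
        nlinarith [mul_nonneg (hA p) (hB (n - p))]
    _ = _ := by rw [sum_add_distrib, hflip, ← add_assoc]

theorem sqrt_le_of_le_min_mul {w g : ℕ → ℝ} (hw : ∀ n, 0 ≤ w n) (hg : ∀ n, 0 ≤ g n) {p q : ℕ}
    (h : w (p + q) ≤ g (min p q) * (w p * w q)) :
    √(w (p + q)) ≤ (√(g p) + √(g q)) * (√(w p) * √(w q)) := by
  calc √(w (p + q)) ≤ √(g (min p q)) * (√(w p) * √(w q)) := by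
        rw [← Real.sqrt_mul (hw p), ← Real.sqrt_mul (hg _)]
        exact Real.sqrt_le_sqrt h
    _ ≤ _ := by
        gcongr
        rcases min_cases p q with ⟨hm, -⟩ | ⟨hm, -⟩ <;> rw [hm]
        exacts [le_add_of_nonneg_right (Real.sqrt_nonneg _),
          le_add_of_nonneg_left (Real.sqrt_nonneg _)]

theorem weighted_sum_sq_le_of_le_conv (M : ℕ) {w g A B C : ℕ → ℝ} (hw : ∀ n, 0 ≤ w n)
    (hg : ∀ n, 0 ≤ g n) (hgs : Summable g)
    (hwg : ∀ p q, 1 ≤ p → 1 ≤ q → w (p + q) ≤ g (min p q) * (w p * w q))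
    (hA : ∀ n, 0 ≤ A n) (hB : ∀ n, 0 ≤ B n) (hC : ∀ n, 0 ≤ C n) {x y : ℝ}
    (hconv : ∀ n, C n ≤ |x| * B n + |y| * A n + ∑ p ∈ Ioo 0 n, A p * B (n - p)) :
    (x * y) ^ 2 + ∑ n ∈ Ioo 0 M, w n * C n ^ 2 ≤
      (8 * ∑' m, g m + 4) *
        ((x ^ 2 + ∑ n ∈ Ioo 0 M, w n * A n ^ 2) * (y ^ 2 + ∑ n ∈ Ioo 0 M, w n * B n ^ 2)) := by
  have hsq : ∀ (D : ℕ → ℝ) n, (√(w n) * D n) ^ 2 = w n * D n ^ 2 := fun D n => by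
    rw [mul_pow, Real.sq_sqrt (hw n)]
  have key := sum_Ioo_sq_le_of_le_conv M (f := fun n => √(g n)) (fun n => Real.sqrt_nonneg _)
    (fun n => mul_nonneg (Real.sqrt_nonneg _) (hA n))
    (fun n => mul_nonneg (Real.sqrt_nonneg _) (hB n))
    (fun n => mul_nonneg (Real.sqrt_nonneg _) (hC n))
    fun n => mul_le_weighted_conv_of_le_conv (fun n => Real.sqrt_nonneg _)
      (fun p q _ _ => sqrt_le_of_le_min_mul hw hg (hwg p q ‹_› ‹_›)) hA hB (hconv n)
  simp only [hsq, Real.sq_sqrt (hg _)] at key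
  have hG : ∑ n ∈ Ioo 0 M, g n ≤ ∑' m, g m := hgs.sum_le_tsum _ fun n _ => hg n
  have hS : ∀ D : ℕ → ℝ, 0 ≤ ∑ n ∈ Ioo 0 M, w n * D n ^ 2 := fun D =>
    sum_nonneg fun n _ => mul_nonneg (hw n) (sq_nonneg _)
  have hSA := hS A
  have hSB := hS B
  have hg₀ : 0 ≤ ∑' m, g m := tsum_nonneg hg
  nlinarith [mul_nonneg (mul_nonneg hSA hSB) (sub_nonneg.mpr hG),
    mul_nonneg hg₀ (mul_nonneg (sq_nonneg x) (sq_nonneg y)),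
    mul_nonneg hg₀ (mul_nonneg (sq_nonneg x) hSB), mul_nonneg hg₀ (mul_nonneg (sq_nonneg y) hSA)]

section GradedAlgebra

variable {E : ℕ → Type*} [∀ n, NormedAddCommGroup (E n)]

theorem norm_cast_congrArg {m n : ℕ} (h : m = n) (x : E m) : ‖cast (congrArg E h) x‖ = ‖x‖ := by
  subst h; rfl

theorem wnorm_eq_of_eq_zero (w : ℕ → ℝ) (a₀ : ℝ) {a : ∀ n, E n} {M : ℕ}
    (ha : ∀ n, M ≤ n → a n = 0) :
    wnorm w a₀ a = √(a₀ ^ 2 + ∑ n ∈ Ioo 0 M, w n * ‖a n‖ ^ 2) := by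
  have hIoo : Ioo 0 M = (range (M - 1)).map (addRightEmbedding 1) := by
    rw [range_eq_Ico, map_add_right_Ico]
    ext n; simp; omega
  rw [wnorm, hIoo, sum_map]
  congr 2
  exact tsum_eq_sum fun n hn => by simp [ha (n + 1) (by simp at hn; omega)]

variable [∀ n, InnerProductSpace ℝ (E n)] {mul : ∀ p q : ℕ, E p →ₗ[ℝ] E q →ₗ[ℝ] E (p + q)}

theorem norm_gradedMul_le
    (hmul : ∀ p q : ℕ, 1 ≤ p → 1 ≤ q → ∀ (x : E p) (y : E q), ‖mul p q x y‖ ≤ ‖x‖ * ‖y‖)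
    (a₀ : ℝ) (a : ∀ n, E n) (b₀ : ℝ) (b : ∀ n, E n) (n : ℕ) :
    ‖gradedMul mul a₀ a b₀ b n‖ ≤
      |a₀| * ‖b n‖ + |b₀| * ‖a n‖ + ∑ p ∈ Ioo 0 n, ‖a p‖ * ‖b (n - p)‖ := by
  refine (norm_add₃_le ..).trans ?_
  rw [norm_smul, norm_smul, Real.norm_eq_abs, Real.norm_eq_abs]
  gcongr
  refine (norm_sum_le _ _).trans (sum_le_sum fun p hp => ?_)
  obtain ⟨hp₀, hpn⟩ := mem_Ioo.mp hp
  have h : p + (n - p) = n := by omega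
  rw [dif_pos h, norm_cast_congrArg h]
  exact hmul p (n - p) hp₀ (by omega) _ _

theorem gradedMul_eq_zero_of_le (a₀ : ℝ) {a : ∀ n, E n} (b₀ : ℝ) {b : ∀ n, E n} {N : ℕ}
    (ha : ∀ n, N ≤ n → a n = 0) (hb : ∀ n, N ≤ n → b n = 0) {n : ℕ} (hn : 2 * N ≤ n) :
    gradedMul mul a₀ a b₀ b n = 0 := by
  rw [gradedMul, ha n (by omega), hb n (by omega), smul_zero, smul_zero, zero_add, zero_add]
  refine sum_eq_zero fun p hp => ?_
  have h : p + (n - p) = n := by simp at hp; omega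
  rw [dif_pos h, ← norm_eq_zero, norm_cast_congrArg h]
  rcases le_or_gt N p with hp' | hp'
  · simp [ha p hp']
  · simp [hb (n - p) (by omega)]

theorem wnorm_gradedMul_le_of_le_min_mul
    (hmul : ∀ p q : ℕ, 1 ≤ p → 1 ≤ q → ∀ (x : E p) (y : E q), ‖mul p q x y‖ ≤ ‖x‖ * ‖y‖)
    {w g : ℕ → ℝ} (hw : ∀ n, 0 ≤ w n) (hg : ∀ n, 0 ≤ g n) (hgs : Summable g)
    (hwg : ∀ p q, 1 ≤ p → 1 ≤ q → w (p + q) ≤ g (min p q) * (w p * w q))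
    (a₀ : ℝ) {a : ∀ n, E n} (b₀ : ℝ) {b : ∀ n, E n} {N : ℕ}
    (ha : ∀ n, N ≤ n → a n = 0) (hb : ∀ n, N ≤ n → b n = 0) :
    wnorm w (a₀ * b₀) (gradedMul mul a₀ a b₀ b) ≤
      √(8 * ∑' m, g m + 4) * wnorm w a₀ a * wnorm w b₀ b := by
  rw [wnorm_eq_of_eq_zero w _ (M := 2 * N) fun n => gradedMul_eq_zero_of_le a₀ b₀ ha hb,
    wnorm_eq_of_eq_zero w a₀ (M := 2 * N) fun n hn => ha n (by omega),
    wnorm_eq_of_eq_zero w b₀ (M := 2 * N) fun n hn => hb n (by omega), mul_assoc,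
    ← Real.sqrt_mul <| add_nonneg (sq_nonneg _) <|
      sum_nonneg fun n _ => mul_nonneg (hw n) (sq_nonneg _),
    ← Real.sqrt_mul (by linarith [(tsum_nonneg hg : 0 ≤ ∑' m, g m)])]
  exact Real.sqrt_le_sqrt <| weighted_sum_sq_le_of_le_conv _ hw hg hgs hwg
    (fun n => norm_nonneg _) (fun n => norm_nonneg _) (fun n => norm_nonneg _)
    (norm_gradedMul_le hmul a₀ a b₀ b)

end GradedAlgebra

/-- Norm estimate (`n.10b`): for `σ < -1`, `ρ, s ∈ ℝ` and the weights `w 0 = 1`,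
`w n = (n!)^σ·2^(ρn)·(1+n)^s` for `n ≥ 1`, there is a constant `γ > 0` such that the product
of the algebra satisfies `‖a ∘ b‖_w ≤ γ·‖a‖_w·‖b‖_w` for all elements `a`, `b`. -/
theorem graded_norm_estimate_sigma_lt_neg_one
    {E : ℕ → Type*} [∀ n, NormedAddCommGroup (E n)] [∀ n, InnerProductSpace ℝ (E n)]
    (mul : ∀ p q : ℕ, E p →ₗ[ℝ] E q →ₗ[ℝ] E (p + q))
    (hmul : ∀ p q : ℕ, 1 ≤ p → 1 ≤ q → ∀ (x : E p) (y : E q), ‖mul p q x y‖ ≤ ‖x‖ * ‖y‖)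
    (σ ρ s : ℝ) (hσ : σ < -1) :
    ∃ γ : ℝ, 0 < γ ∧
      ∀ (a₀ : ℝ) (a : ∀ n, E n), (∃ N, ∀ n, N ≤ n → a n = 0) →
      ∀ (b₀ : ℝ) (b : ∀ n, E n), (∃ N, ∀ n, N ≤ n → b n = 0) →
        wnorm (wgt σ ρ s) (a₀ * b₀) (gradedMul mul a₀ a b₀ b) ≤
          γ * wnorm (wgt σ ρ s) a₀ a * wnorm (wgt σ ρ s) b₀ b := by
  set g : ℕ → ℝ := fun m => ((2 : ℝ) ^ σ) ^ m * (1 + m : ℝ) ^ |s|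
  have hg : ∀ m, 0 ≤ g m := fun m => by positivity
  have hgs : Summable g := summable_geometric_mul_one_add_rpow (by positivity)
    (Real.rpow_lt_one_of_one_lt_of_neg one_lt_two (by linarith)) |s|
  refine ⟨√(8 * ∑' m, g m + 4), by positivity, ?_⟩
  rintro a₀ a ⟨Na, ha⟩ b₀ b ⟨Nb, hb⟩
  exact wnorm_gradedMul_le_of_le_min_mul hmul (fun n => (wgt_pos σ ρ s n).le) hg hgs
    (fun p q _ _ => wgt_add_le (by linarith) ρ s p q) a₀ b₀ (N := Na + Nb)
    (fun n hn => ha n (by omega)) (fun n hn => hb n (by omega))
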